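/- The support poset of every series-parallel ideal is a forest: if I ⊆ k[x_1,…,x_n] is a series-parallel ideal, then for every i ∈ {1,…,n} the family { C_j(I) : j ∈ {1,…,n}, C_j(I) ⊊ C_i(I) } is totally ordered by inclusion. -/
import Mathlib


open MvPolynomial

/-- The squarefree monomial with support `s`: `∏_{j ∈ s} x_j`. -/
noncomputable def sfMon (𝕜 : Type) [Field 𝕜] {σ : Type} (s : Finset σ) : MvPolynomial σ 𝕜 :=
  ∏ j ∈ s, X j

/-- The supports of the minimal monomial generating set `G(I)` of a squarefree monomial
ideal `I`: supports `s` of squarefree monomials in `I` no proper (squarefree) divisor of which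
lies in `I`. -/
def sqfreeMinGens {𝕜 : Type} [Field 𝕜] {σ : Type} (I : Ideal (MvPolynomial σ 𝕜)) :
    Set (Finset σ) :=
  { s | sfMon 𝕜 s ∈ I ∧ ∀ t : Finset σ, t ⊂ s → sfMon 𝕜 t ∉ I }

/-- `C_i(I) = ⋂ { supp m : m ∈ G(I), x_i ∣ m }`. -/
def suppC {𝕜 : Type} [Field 𝕜] {σ : Type} (I : Ideal (MvPolynomial σ 𝕜)) (i : σ) : Set σ :=
  ⋂ s ∈ { s | s ∈ sqfreeMinGens I ∧ i ∈ s }, (s : Set σ)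


/-- Series-parallel ideals, defined inductively: `⟨x_1⟩ ⊆ 𝕜[x_1]` is series-parallel, and if
`I₁ ⊆ 𝕜[x_1,…,x_n]` and `I₂ ⊆ 𝕜[x_{n+1},…,x_{n+m}]` are series-parallel then so are
`I₁' + I₂'` and `I₁' ∩ I₂'` in `𝕜[x_1,…,x_{n+m}]`, where `I₁'`, `I₂'` are the extensions
along the inclusions of polynomial rings (renaming along `Fin.castAdd` and `Fin.natAdd`). -/
inductive IsSeriesParallel (𝕜 : Type) [Field 𝕜] :
    (n : ℕ) → Ideal (MvPolynomial (Fin n) 𝕜) → Prop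
  | basic : IsSeriesParallel 𝕜 1 (Ideal.span {MvPolynomial.X 0})
  | sum {n m : ℕ} {I₁ : Ideal (MvPolynomial (Fin n) 𝕜)} {I₂ : Ideal (MvPolynomial (Fin m) 𝕜)} :
      IsSeriesParallel 𝕜 n I₁ → IsSeriesParallel 𝕜 m I₂ →
      IsSeriesParallel 𝕜 (n + m)
        (Ideal.map (MvPolynomial.rename (Fin.castAdd m)).toRingHom I₁ ⊔
         Ideal.map (MvPolynomial.rename (Fin.natAdd n)).toRingHom I₂)
  | inter {n m : ℕ} {I₁ : Ideal (MvPolynomial (Fin n) 𝕜)} {I₂ : Ideal (MvPolynomial (Fin m) 𝕜)} :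
      IsSeriesParallel 𝕜 n I₁ → IsSeriesParallel 𝕜 m I₂ →
      IsSeriesParallel 𝕜 (n + m)
        (Ideal.map (MvPolynomial.rename (Fin.castAdd m)).toRingHom I₁ ⊓
         Ideal.map (MvPolynomial.rename (Fin.natAdd n)).toRingHom I₂)


section Aux

variable {σ : Type}

open MvPolynomial

/-- indicator exponent -/
noncomputable def eS (s : Finset σ) : σ →₀ ℕ := ∑ j ∈ s, Finsupp.single j 1

lemma eS_apply_of_mem {s : Finset σ} {j : σ} (hj : j ∈ s) : eS s j = 1 := by
  classical
  rw [eS, Finset.sum_apply']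
  simp only [Finsupp.single_apply]
  rw [Finset.sum_ite_eq' s j (fun _ => 1), if_pos hj]

lemma eS_apply_of_not_mem {s : Finset σ} {j : σ} (hj : j ∉ s) : eS s j = 0 := by
  classical
  rw [eS, Finset.sum_apply']
  simp only [Finsupp.single_apply]
  rw [Finset.sum_ite_eq' s j (fun _ => 1), if_neg hj]

lemma eS_le_iff {s t : Finset σ} : eS s ≤ eS t ↔ s ⊆ t := by
  classical
  rw [Finsupp.le_def]
  constructor
  · intro h j hj
    have := h j
    rw [eS_apply_of_mem hj] at this
    by_contra hjt
    rw [eS_apply_of_not_mem hjt] at this; omega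
  · intro h j
    by_cases h1 : j ∈ s
    · rw [eS_apply_of_mem h1, eS_apply_of_mem (h h1)]
    · rw [eS_apply_of_not_mem h1]; omega

lemma eS_inj {s t : Finset σ} (h : eS s = eS t) : s = t :=
  le_antisymm (eS_le_iff.mp h.le) (eS_le_iff.mp h.ge)

lemma eS_union [DecidableEq σ] {s t : Finset σ} (h : Disjoint s t) :
    eS (s ∪ t) = eS s + eS t := by
  rw [eS, eS, eS, Finset.sum_union h]

lemma eS_add_le_iff {s t : Finset σ} (h : Disjoint s t) (e : σ →₀ ℕ) :
    eS s + eS t ≤ e ↔ eS s ≤ e ∧ eS t ≤ e := by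
  classical
  simp only [Finsupp.le_def, Finsupp.add_apply]
  constructor
  · intro he
    constructor <;> intro j <;> have := he j <;> omega
  · intro ⟨h1, h2⟩ j
    have h1j := h1 j; have h2j := h2 j
    by_cases hs : j ∈ s
    · have ht : j ∉ t := fun ht => (Finset.disjoint_left.mp h hs) ht
      rw [eS_apply_of_not_mem ht] at *; omega
    · rw [eS_apply_of_not_mem hs] at *; omega

lemma support_eS (s : Finset σ) : (eS s).support = s := by
  ext j
  rw [Finsupp.mem_support_iff]
  constructor
  · intro h; by_contra hj; exact h (eS_apply_of_not_mem hj)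
  · intro h; rw [eS_apply_of_mem h]; omega

lemma sfMon_eq_monomial (𝕜 : Type) [Field 𝕜] (s : Finset σ) :
    sfMon 𝕜 s = monomial (eS s) (1 : 𝕜) := by
  rw [← prod_X_pow_eq_monomial, support_eS, sfMon]
  exact Finset.prod_congr rfl fun j hj => by rw [eS_apply_of_mem hj, pow_one]

lemma mem_span_sfMon_iff (𝕜 : Type) [Field 𝕜] (G : Set (Finset σ)) (p : MvPolynomial σ 𝕜) :
    p ∈ Ideal.span (sfMon 𝕜 '' G) ↔ ∀ e ∈ p.support, ∃ s ∈ G, eS s ≤ e := by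
  have h : sfMon 𝕜 '' G = (fun e => monomial e (1 : 𝕜)) '' (eS '' G) := by
    rw [Set.image_image]
    exact Set.image_congr fun s _ => sfMon_eq_monomial 𝕜 s
  rw [h, mem_ideal_span_monomial_image]
  simp [Set.exists_mem_image]

lemma sfMon_mem_span_iff (𝕜 : Type) [Field 𝕜] (G : Set (Finset σ)) (t : Finset σ) :
    sfMon 𝕜 t ∈ Ideal.span (sfMon 𝕜 '' G) ↔ ∃ s ∈ G, s ⊆ t := by
  rw [mem_span_sfMon_iff]
  have hsup : (sfMon 𝕜 t).support = {eS t} := by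
    classical
    rw [sfMon_eq_monomial, support_monomial, if_neg (one_ne_zero)]
  rw [hsup]
  simp [eS_le_iff]

lemma sqfreeMinGens_span_eq (𝕜 : Type) [Field 𝕜] (G : Set (Finset σ))
    (hanti : ∀ s ∈ G, ∀ t ∈ G, s ⊆ t → s = t) :
    sqfreeMinGens (Ideal.span (sfMon 𝕜 '' G)) = G := by
  ext s
  simp only [sqfreeMinGens, Set.mem_setOf_eq, sfMon_mem_span_iff]
  constructor
  · rintro ⟨⟨g, hg, hgs⟩, hmin⟩
    rcases eq_or_ne g s with rfl | hne
    · exact hg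
    · exact absurd ⟨g, hg, Finset.Subset.refl g⟩ (hmin g (hgs.ssubset_of_ne hne))
  · intro hs
    refine ⟨⟨s, hs, Finset.Subset.refl s⟩, fun t ht ⟨g, hg, hgt⟩ => ?_⟩
    have hgs : g = s := hanti g hg s hs (hgt.trans ht.subset)
    subst hgs
    exact (ht.not_subset) hgt

/-- The combinatorial shadow of series-parallel ideals: their families of minimal
generator supports. -/
inductive SPfam : (N : ℕ) → Set (Finset (Fin N)) → Prop
  | basic : SPfam 1 {{0}}
  | sum {n m : ℕ} {G₁ : Set (Finset (Fin n))} {G₂ : Set (Finset (Fin m))} :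
      SPfam n G₁ → SPfam m G₂ →
      SPfam (n + m) ((Finset.image (Fin.castAdd m) '' G₁) ∪ (Finset.image (Fin.natAdd n) '' G₂))
  | inter {n m : ℕ} {G₁ : Set (Finset (Fin n))} {G₂ : Set (Finset (Fin m))} :
      SPfam n G₁ → SPfam m G₂ →
      SPfam (n + m)
        ((fun p : Finset (Fin n) × Finset (Fin m) =>
            p.1.image (Fin.castAdd m) ∪ p.2.image (Fin.natAdd n)) '' (G₁ ×ˢ G₂))

lemma natAdd_injective (n m : ℕ) : Function.Injective (@Fin.natAdd n m) := by
  intro x y h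
  have := congrArg Fin.val h
  simp at this
  exact Fin.ext this

lemma castAdd_ne_natAdd {n m : ℕ} (x : Fin n) (y : Fin m) :
    Fin.castAdd m x ≠ Fin.natAdd n y := by
  intro h
  have := congrArg Fin.val h
  simp at this
  omega

lemma disjoint_image_cd {n m N : ℕ} {c : Fin n → Fin N} {d : Fin m → Fin N}
    (hcd : ∀ x y, c x ≠ d y) (s₁ : Finset (Fin n)) (s₂ : Finset (Fin m)) :
    Disjoint (s₁.image c) (s₂.image d) := by
  rw [Finset.disjoint_left]
  rintro a ha hb
  simp only [Finset.mem_image] at ha hb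
  obtain ⟨x, _, rfl⟩ := ha
  obtain ⟨y, _, hy⟩ := hb
  exact hcd x y hy.symm

lemma rename_sfMon {𝕜 : Type} [Field 𝕜] {a b : Type} [DecidableEq b] {f : a → b}
    (hf : Function.Injective f) (s : Finset a) :
    rename f (sfMon 𝕜 s) = sfMon 𝕜 (s.image f) := by
  rw [sfMon, sfMon, map_prod, Finset.prod_image (fun x _ y _ h => hf h)]
  simp

lemma map_span_sfMon {𝕜 : Type} [Field 𝕜] {a b : Type} [DecidableEq b] {f : a → b}
    (hf : Function.Injective f) (G : Set (Finset a)) :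
    Ideal.map (rename (R := 𝕜) f).toRingHom (Ideal.span (sfMon 𝕜 '' G)) =
      Ideal.span (sfMon 𝕜 '' (Finset.image f '' G)) := by
  rw [Ideal.map_span]
  congr 1
  rw [Set.image_image, Set.image_image]
  exact Set.image_congr fun s _ => rename_sfMon hf s

lemma span_inter_eq {𝕜 : Type} [Field 𝕜] {n m N : ℕ} {c : Fin n → Fin N} {d : Fin m → Fin N}
    (hcd : ∀ x y, c x ≠ d y) (G₁ : Set (Finset (Fin n))) (G₂ : Set (Finset (Fin m))) :
    Ideal.span (sfMon 𝕜 '' (Finset.image c '' G₁)) ⊓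
        Ideal.span (sfMon 𝕜 '' (Finset.image d '' G₂)) =
      Ideal.span (sfMon 𝕜 ''
        ((fun p : Finset (Fin n) × Finset (Fin m) =>
            p.1.image c ∪ p.2.image d) '' (G₁ ×ˢ G₂))) := by
  ext p
  rw [Submodule.mem_inf, mem_span_sfMon_iff, mem_span_sfMon_iff, mem_span_sfMon_iff]
  constructor
  · rintro ⟨h1, h2⟩ e he
    obtain ⟨s, hs, hse⟩ := h1 e he
    obtain ⟨t, ht, hte⟩ := h2 e he
    simp only [Set.mem_image] at hs ht
    obtain ⟨s₁, hs₁, rfl⟩ := hs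
    obtain ⟨s₂, hs₂, rfl⟩ := ht
    refine ⟨s₁.image c ∪ s₂.image d, ⟨⟨s₁, s₂⟩, ⟨hs₁, hs₂⟩, rfl⟩, ?_⟩
    rw [eS_union (disjoint_image_cd hcd s₁ s₂),
      eS_add_le_iff (disjoint_image_cd hcd s₁ s₂)]
    exact ⟨hse, hte⟩
  · intro h
    constructor <;> intro e he <;> obtain ⟨s, hs, hse⟩ := h e he <;>
      obtain ⟨⟨s₁, s₂⟩, ⟨hs₁, hs₂⟩, rfl⟩ := hs <;>
      rw [eS_union (disjoint_image_cd hcd s₁ s₂),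
        eS_add_le_iff (disjoint_image_cd hcd s₁ s₂)] at hse
    · exact ⟨s₁.image c, ⟨s₁, hs₁, rfl⟩, hse.1⟩
    · exact ⟨s₂.image d, ⟨s₂, hs₂, rfl⟩, hse.2⟩

lemma exists_SPfam {𝕜 : Type} [Field 𝕜] {n : ℕ} {I : Ideal (MvPolynomial (Fin n) 𝕜)}
    (hsp : IsSeriesParallel 𝕜 n I) :
    ∃ G : Set (Finset (Fin n)), SPfam n G ∧ I = Ideal.span (sfMon 𝕜 '' G) := by
  induction hsp with
  | basic =>
    refine ⟨{{0}}, SPfam.basic, ?_⟩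
    congr 1
    rw [Set.image_singleton, sfMon]
    simp
  | @sum n m I₁ I₂ h₁ h₂ ih₁ ih₂ =>
    obtain ⟨G₁, hG₁, rfl⟩ := ih₁
    obtain ⟨G₂, hG₂, rfl⟩ := ih₂
    refine ⟨_, SPfam.sum hG₁ hG₂, ?_⟩
    rw [map_span_sfMon (Fin.castAdd_injective _ _), map_span_sfMon (natAdd_injective _ _),
      ← Ideal.span_union, ← Set.image_union]
  | @inter n m I₁ I₂ h₁ h₂ ih₁ ih₂ =>
    obtain ⟨G₁, hG₁, rfl⟩ := ih₁
    obtain ⟨G₂, hG₂, rfl⟩ := ih₂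
    refine ⟨_, SPfam.inter hG₁ hG₂, ?_⟩
    rw [map_span_sfMon (Fin.castAdd_injective _ _), map_span_sfMon (natAdd_injective _ _),
      span_inter_eq castAdd_ne_natAdd]

/-- `C_i` of a family of supports. -/
def CS {γ : Type} (G : Set (Finset γ)) (i : γ) : Set γ :=
  ⋂ s ∈ { s | s ∈ G ∧ i ∈ s }, (s : Set γ)

lemma mem_CS {γ : Type} {G : Set (Finset γ)} {i x : γ} :
    x ∈ CS G i ↔ ∀ s ∈ G, i ∈ s → x ∈ s := by
  simp [CS]

lemma self_mem_CS {γ : Type} {G : Set (Finset γ)} {i : γ} : i ∈ CS G i :=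
  mem_CS.mpr fun _ _ hi => hi

lemma K_subset_CS {γ : Type} (G : Set (Finset γ)) (i : γ) :
    (⋂ s ∈ G, (s : Set γ)) ⊆ CS G i := by
  intro x hx
  rw [mem_CS]
  intro s hs _
  exact Set.mem_iInter₂.mp hx s hs

/-- The package of properties we prove of series-parallel support families. -/
structure Pack {γ : Type} (G : Set (Finset γ)) : Prop where
  nonmem : ∀ s ∈ G, s.Nonempty
  full : ∀ i, ∃ s ∈ G, i ∈ s
  anti : ∀ s ∈ G, ∀ t ∈ G, s ⊆ t → s = t
  forest : ∀ i j j', CS G j ⊂ CS G i → CS G j' ⊂ CS G i →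
    CS G j ⊆ CS G j' ∨ CS G j' ⊆ CS G j

section abs
variable {α β γ : Type} [DecidableEq γ] {c : α → γ} {d : β → γ}

def sumFam (c : α → γ) (d : β → γ) (G₁ : Set (Finset α)) (G₂ : Set (Finset β)) :
    Set (Finset γ) :=
  (Finset.image c '' G₁) ∪ (Finset.image d '' G₂)

def interFam (c : α → γ) (d : β → γ) (G₁ : Set (Finset α)) (G₂ : Set (Finset β)) :
    Set (Finset γ) :=
  (fun p : Finset α × Finset β => p.1.image c ∪ p.2.image d) '' (G₁ ×ˢ G₂)

lemma sumFam_comm {G₁ : Set (Finset α)} {G₂ : Set (Finset β)} :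
    sumFam d c G₂ G₁ = sumFam c d G₁ G₂ :=
  Set.union_comm _ _

lemma interFam_comm {G₁ : Set (Finset α)} {G₂ : Set (Finset β)} :
    interFam d c G₂ G₁ = interFam c d G₁ G₂ := by
  ext u
  constructor
  · rintro ⟨⟨s, t⟩, ⟨hs, ht⟩, rfl⟩
    exact ⟨⟨t, s⟩, ⟨ht, hs⟩, Finset.union_comm _ _⟩
  · rintro ⟨⟨s, t⟩, ⟨hs, ht⟩, rfl⟩
    exact ⟨⟨t, s⟩, ⟨ht, hs⟩, Finset.union_comm _ _⟩

lemma mem_image_c {s : Finset α} {y : α} (hc : Function.Injective c) :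
    c y ∈ s.image c ↔ y ∈ s := by
  constructor
  · intro h
    obtain ⟨z, hz, hzy⟩ := Finset.mem_image.mp h
    exact hc hzy ▸ hz
  · exact fun h => Finset.mem_image_of_mem c h

lemma not_mem_image_d (hcd : ∀ x y, c x ≠ d y) {s : Finset β} (x : α) :
    c x ∉ s.image d := fun h => by
  obtain ⟨y, _, hy⟩ := Finset.mem_image.mp h
  exact hcd x y hy.symm

lemma image_union_subset_iff (hc : Function.Injective c) (hd : Function.Injective d)
    (hcd : ∀ x y, c x ≠ d y) {A A' : Set α} {B B' : Set β} :
    c '' A ∪ d '' B ⊆ c '' A' ∪ d '' B' ↔ A ⊆ A' ∧ B ⊆ B' := by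
  constructor
  · intro h
    constructor
    · intro a ha
      rcases h (Set.mem_union_left _ ⟨a, ha, rfl⟩) with ⟨a', ha', he⟩ | ⟨b', _, he⟩
      · exact hc he ▸ ha'
      · exact absurd he.symm (hcd a b')
    · intro b hb
      rcases h (Set.mem_union_right _ ⟨b, hb, rfl⟩) with ⟨a', _, he⟩ | ⟨b', hb', he⟩
      · exact absurd he (hcd a' b)
      · exact hd he ▸ hb'
  · rintro ⟨h1, h2⟩
    exact Set.union_subset_union (Set.image_mono h1) (Set.image_mono h2)

variable {G₁ : Set (Finset α)} {G₂ : Set (Finset β)}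

lemma CS_sumFam (hc : Function.Injective c) (hcd : ∀ x y, c x ≠ d y)
    (full₁ : ∀ i, ∃ s ∈ G₁, i ∈ s) (i₀ : α) :
    CS (sumFam c d G₁ G₂) (c i₀) = c '' CS G₁ i₀ := by
  ext x
  constructor
  · intro hx
    obtain ⟨s₀, hs₀, hi₀⟩ := full₁ i₀
    have hx₀ := mem_CS.mp hx (s₀.image c) (Or.inl ⟨s₀, hs₀, rfl⟩)
      (Finset.mem_image_of_mem c hi₀)
    obtain ⟨y, _, rfl⟩ := Finset.mem_image.mp hx₀
    refine ⟨y, mem_CS.mpr fun s hs hi => ?_, rfl⟩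
    have := mem_CS.mp hx (s.image c) (Or.inl ⟨s, hs, rfl⟩) (Finset.mem_image_of_mem c hi)
    exact (mem_image_c hc).mp this
  · rintro ⟨y, hy, rfl⟩
    rw [mem_CS]
    rintro s (⟨s₁, h1, rfl⟩ | ⟨s₂, h2, rfl⟩) his
    · exact Finset.mem_image_of_mem c (mem_CS.mp hy s₁ h1 ((mem_image_c hc).mp his))
    · exact absurd his (not_mem_image_d hcd i₀)

lemma CS_interFam (hc : Function.Injective c) (hd : Function.Injective d)
    (hcd : ∀ x y, c x ≠ d y)
    (hsurj : ∀ z, (∃ x, c x = z) ∨ (∃ y, d y = z))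
    (full₁ : ∀ i, ∃ s ∈ G₁, i ∈ s) (hG₂ : G₂.Nonempty) (i₀ : α) :
    CS (interFam c d G₁ G₂) (c i₀) = c '' CS G₁ i₀ ∪ d '' (⋂ s ∈ G₂, (s : Set β)) := by
  ext x
  constructor
  · intro hx
    rcases hsurj x with ⟨y, rfl⟩ | ⟨y, rfl⟩
    · refine Or.inl ⟨y, mem_CS.mpr fun s₁ h1 hi => ?_, rfl⟩
      obtain ⟨s₂, h2⟩ := hG₂
      have := mem_CS.mp hx (s₁.image c ∪ s₂.image d) ⟨⟨s₁, s₂⟩, ⟨h1, h2⟩, rfl⟩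
        (Finset.mem_union_left _ (Finset.mem_image_of_mem c hi))
      rcases Finset.mem_union.mp this with h | h
      · exact (mem_image_c hc).mp h
      · exact absurd h (not_mem_image_d hcd y)
    · refine Or.inr ⟨y, Set.mem_iInter₂.mpr fun s₂ h2 => ?_, rfl⟩
      obtain ⟨s₁, h1, hi⟩ := full₁ i₀
      have := mem_CS.mp hx (s₁.image c ∪ s₂.image d) ⟨⟨s₁, s₂⟩, ⟨h1, h2⟩, rfl⟩
        (Finset.mem_union_left _ (Finset.mem_image_of_mem c hi))
      rcases Finset.mem_union.mp this with h | h
      · obtain ⟨z, _, hz⟩ := Finset.mem_image.mp h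
        exact absurd hz (hcd z y).elim
      · exact Finset.mem_coe.mp ((mem_image_c hd).mp h)
  · intro hx
    rw [mem_CS]
    rintro s ⟨⟨s₁, s₂⟩, ⟨h1, h2⟩, rfl⟩ his
    have hi₀ : i₀ ∈ s₁ := by
      rcases Finset.mem_union.mp his with h | h
      · exact (mem_image_c hc).mp h
      · exact absurd h (not_mem_image_d hcd i₀)
    rcases hx with ⟨y, hy, rfl⟩ | ⟨y, hy, rfl⟩
    · exact Finset.mem_union_left _ (Finset.mem_image_of_mem c (mem_CS.mp hy s₁ h1 hi₀))
    · exact Finset.mem_union_right _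
        (Finset.mem_image_of_mem d (Set.mem_iInter₂.mp hy s₂ h2))
end abs

section abs2
variable {α β γ : Type} [DecidableEq γ] {c : α → γ} {d : β → γ}
  {G₁ : Set (Finset α)} {G₂ : Set (Finset β)}

lemma forest_at_sum (hc : Function.Injective c) (hd : Function.Injective d)
    (hcd : ∀ x y, c x ≠ d y) (hsurj : ∀ z, (∃ x, c x = z) ∨ (∃ y, d y = z))
    (h₁ : Pack G₁) (h₂ : Pack G₂) (i₀ : α) (j j' : γ)
    (hj : CS (sumFam c d G₁ G₂) j ⊂ CS (sumFam c d G₁ G₂) (c i₀))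
    (hj' : CS (sumFam c d G₁ G₂) j' ⊂ CS (sumFam c d G₁ G₂) (c i₀)) :
    CS (sumFam c d G₁ G₂) j ⊆ CS (sumFam c d G₁ G₂) j' ∨
      CS (sumFam c d G₁ G₂) j' ⊆ CS (sumFam c d G₁ G₂) j := by
  have hcd' : ∀ y x, d y ≠ c x := fun y x h => hcd x y h.symm
  have hCSc : ∀ i₀, CS (sumFam c d G₁ G₂) (c i₀) = c '' CS G₁ i₀ :=
    CS_sumFam hc hcd h₁.full
  have hCSd : ∀ j₀, CS (sumFam c d G₁ G₂) (d j₀) = d '' CS G₂ j₀ := by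
    intro j₀
    rw [← sumFam_comm]
    exact CS_sumFam hd hcd' h₂.full j₀
  have classify : ∀ j, CS (sumFam c d G₁ G₂) j ⊂ CS (sumFam c d G₁ G₂) (c i₀) →
      ∃ j₀, j = c j₀ ∧ CS G₁ j₀ ⊂ CS G₁ i₀ := by
    intro j hjlt
    rcases hsurj j with ⟨j₀, rfl⟩ | ⟨j₀, rfl⟩
    · refine ⟨j₀, rfl, ?_⟩
      rw [hCSc, hCSc] at hjlt
      rw [Set.ssubset_def] at hjlt ⊢
      exact ⟨(Set.image_subset_image_iff hc).mp hjlt.1, fun h => hjlt.2 (Set.image_mono h)⟩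
    · exfalso
      rw [hCSd, hCSc] at hjlt
      obtain ⟨y, _, hy⟩ := hjlt.1 ⟨j₀, self_mem_CS, rfl⟩
      exact hcd y j₀ hy
  obtain ⟨j₀, rfl, hj₀⟩ := classify j hj
  obtain ⟨j₀', rfl, hj₀'⟩ := classify j' hj'
  rcases h₁.forest i₀ j₀ j₀' hj₀ hj₀' with h | h
  · left; rw [hCSc, hCSc]; exact Set.image_mono h
  · right; rw [hCSc, hCSc]; exact Set.image_mono h

lemma pack_sum (hc : Function.Injective c) (hd : Function.Injective d)
    (hcd : ∀ x y, c x ≠ d y) (hsurj : ∀ z, (∃ x, c x = z) ∨ (∃ y, d y = z))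
    (h₁ : Pack G₁) (h₂ : Pack G₂) : Pack (sumFam c d G₁ G₂) := by
  have hcd' : ∀ y x, d y ≠ c x := fun y x h => hcd x y h.symm
  have hsurj' : ∀ z, (∃ y, d y = z) ∨ (∃ x, c x = z) := fun z => (hsurj z).symm
  refine ⟨?_, ?_, ?_, ?_⟩
  · rintro s (⟨s₁, h1, rfl⟩ | ⟨s₂, h2, rfl⟩)
    · exact (h₁.nonmem s₁ h1).image c
    · exact (h₂.nonmem s₂ h2).image d
  · intro z
    rcases hsurj z with ⟨x, rfl⟩ | ⟨y, rfl⟩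
    · obtain ⟨s, hs, hx⟩ := h₁.full x
      exact ⟨s.image c, Or.inl ⟨s, hs, rfl⟩, Finset.mem_image_of_mem c hx⟩
    · obtain ⟨s, hs, hy⟩ := h₂.full y
      exact ⟨s.image d, Or.inr ⟨s, hs, rfl⟩, Finset.mem_image_of_mem d hy⟩
  · rintro s (⟨s₁, h1, rfl⟩ | ⟨s₂, h2, rfl⟩) t (⟨t₁, k1, rfl⟩ | ⟨t₂, k2, rfl⟩) hsub
    · rw [h₁.anti s₁ h1 t₁ k1 ((Finset.image_subset_image_iff hc).mp hsub)]
    · obtain ⟨x, hx⟩ := h₁.nonmem s₁ h1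
      exact absurd (hsub (Finset.mem_image_of_mem c hx)) (not_mem_image_d hcd x)
    · obtain ⟨y, hy⟩ := h₂.nonmem s₂ h2
      exact absurd (hsub (Finset.mem_image_of_mem d hy)) (not_mem_image_d hcd' y)
    · rw [h₂.anti s₂ h2 t₂ k2 ((Finset.image_subset_image_iff hd).mp hsub)]
  · intro i j j' hj hj'
    rcases hsurj i with ⟨i₀, rfl⟩ | ⟨i₀, rfl⟩
    · exact forest_at_sum hc hd hcd hsurj h₁ h₂ i₀ j j' hj hj'
    · have := forest_at_sum hd hc hcd' hsurj' h₂ h₁ i₀ j j'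
      rw [sumFam_comm] at this
      exact this hj hj'

lemma forest_at_inter (hc : Function.Injective c) (hd : Function.Injective d)
    (hcd : ∀ x y, c x ≠ d y) (hsurj : ∀ z, (∃ x, c x = z) ∨ (∃ y, d y = z))
    (hG₁ : G₁.Nonempty) (hG₂ : G₂.Nonempty)
    (h₁ : Pack G₁) (h₂ : Pack G₂) (i₀ : α) (j j' : γ)
    (hj : CS (interFam c d G₁ G₂) j ⊂ CS (interFam c d G₁ G₂) (c i₀))
    (hj' : CS (interFam c d G₁ G₂) j' ⊂ CS (interFam c d G₁ G₂) (c i₀)) :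
    CS (interFam c d G₁ G₂) j ⊆ CS (interFam c d G₁ G₂) j' ∨
      CS (interFam c d G₁ G₂) j' ⊆ CS (interFam c d G₁ G₂) j := by
  have hcd' : ∀ y x, d y ≠ c x := fun y x h => hcd x y h.symm
  have hsurj' : ∀ z, (∃ y, d y = z) ∨ (∃ x, c x = z) := fun z => (hsurj z).symm
  set K₁ : Set α := ⋂ s ∈ G₁, (s : Set α) with hK₁
  set K₂ : Set β := ⋂ s ∈ G₂, (s : Set β) with hK₂
  have hCSc : ∀ l₀, CS (interFam c d G₁ G₂) (c l₀) = c '' CS G₁ l₀ ∪ d '' K₂ :=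
    CS_interFam hc hd hcd hsurj h₁.full hG₂
  have hCSd : ∀ l₀, CS (interFam c d G₁ G₂) (d l₀) = c '' K₁ ∪ d '' CS G₂ l₀ := by
    intro l₀
    rw [← interFam_comm, CS_interFam hd hc hcd' hsurj' h₂.full hG₁ l₀]
    exact Set.union_comm _ _
  have hKmin : ∀ l, c '' K₁ ∪ d '' K₂ ⊆ CS (interFam c d G₁ G₂) l := by
    intro l
    rcases hsurj l with ⟨l₀, rfl⟩ | ⟨l₀, rfl⟩
    · rw [hCSc]
      exact Set.union_subset_union (Set.image_mono (K_subset_CS G₁ l₀)) subset_rfl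
    · rw [hCSd]
      exact Set.union_subset_union subset_rfl (Set.image_mono (K_subset_CS G₂ l₀))
  have classify : ∀ j, CS (interFam c d G₁ G₂) j ⊂ CS (interFam c d G₁ G₂) (c i₀) →
      (∃ j₀, j = c j₀ ∧ CS G₁ j₀ ⊂ CS G₁ i₀) ∨
        CS (interFam c d G₁ G₂) j = c '' K₁ ∪ d '' K₂ := by
    intro j hjlt
    rcases hsurj j with ⟨j₀, rfl⟩ | ⟨j₀, rfl⟩
    · left
      refine ⟨j₀, rfl, ?_⟩
      rw [hCSc, hCSc, Set.ssubset_def] at hjlt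
      rw [Set.ssubset_def]
      have h1 := (image_union_subset_iff hc hd hcd).mp hjlt.1
      exact ⟨h1.1, fun h => hjlt.2 ((image_union_subset_iff hc hd hcd).mpr ⟨h, subset_rfl⟩)⟩
    · right
      rw [hCSd] at hjlt ⊢
      rw [hCSc] at hjlt
      have h1 := (image_union_subset_iff hc hd hcd).mp hjlt.1
      rw [subset_antisymm h1.2 (K_subset_CS G₂ j₀)]
  rcases classify j hj with ⟨j₀, rfl, hlt⟩ | heq
  · rcases classify j' hj' with ⟨j₀', rfl, hlt'⟩ | heq'
    · rcases h₁.forest i₀ j₀ j₀' hlt hlt' with h | h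
      · left; rw [hCSc, hCSc]
        exact Set.union_subset_union (Set.image_mono h) subset_rfl
      · right; rw [hCSc, hCSc]
        exact Set.union_subset_union (Set.image_mono h) subset_rfl
    · right; rw [heq']; exact hKmin _
  · left; rw [heq]; exact hKmin _

lemma pack_inter (hc : Function.Injective c) (hd : Function.Injective d)
    (hcd : ∀ x y, c x ≠ d y) (hsurj : ∀ z, (∃ x, c x = z) ∨ (∃ y, d y = z))
    (hα : Nonempty α) (hβ : Nonempty β)
    (h₁ : Pack G₁) (h₂ : Pack G₂) : Pack (interFam c d G₁ G₂) := by
  have hcd' : ∀ y x, d y ≠ c x := fun y x h => hcd x y h.symm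
  have hsurj' : ∀ z, (∃ y, d y = z) ∨ (∃ x, c x = z) := fun z => (hsurj z).symm
  obtain ⟨a0⟩ := hα
  obtain ⟨b0⟩ := hβ
  have hG₁ : G₁.Nonempty := (h₁.full a0).imp fun s hs => hs.1
  have hG₂ : G₂.Nonempty := (h₂.full b0).imp fun s hs => hs.1
  refine ⟨?_, ?_, ?_, ?_⟩
  · rintro s ⟨⟨s₁, s₂⟩, ⟨h1, h2⟩, rfl⟩
    obtain ⟨x, hx⟩ := h₁.nonmem s₁ h1
    exact ⟨c x, Finset.mem_union_left _ (Finset.mem_image_of_mem c hx)⟩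
  · intro z
    rcases hsurj z with ⟨x, rfl⟩ | ⟨y, rfl⟩
    · obtain ⟨s₁, hs₁, hx⟩ := h₁.full x
      obtain ⟨s₂, hs₂⟩ := hG₂
      exact ⟨s₁.image c ∪ s₂.image d, ⟨⟨s₁, s₂⟩, ⟨hs₁, hs₂⟩, rfl⟩,
        Finset.mem_union_left _ (Finset.mem_image_of_mem c hx)⟩
    · obtain ⟨s₂, hs₂, hy⟩ := h₂.full y
      obtain ⟨s₁, hs₁⟩ := hG₁
      exact ⟨s₁.image c ∪ s₂.image d, ⟨⟨s₁, s₂⟩, ⟨hs₁, hs₂⟩, rfl⟩,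
        Finset.mem_union_right _ (Finset.mem_image_of_mem d hy)⟩
  · rintro s ⟨⟨s₁, s₂⟩, ⟨h1, h2⟩, rfl⟩ t ⟨⟨t₁, t₂⟩, ⟨k1, k2⟩, rfl⟩ hsub
    have hs₁ : s₁ ⊆ t₁ := by
      intro x hx
      have := hsub (Finset.mem_union_left _ (Finset.mem_image_of_mem c hx))
      rcases Finset.mem_union.mp this with h | h
      · exact (mem_image_c hc).mp h
      · exact absurd h (not_mem_image_d hcd x)
    have hs₂ : s₂ ⊆ t₂ := by
      intro y hy
      have := hsub (Finset.mem_union_right _ (Finset.mem_image_of_mem d hy))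
      rcases Finset.mem_union.mp this with h | h
      · exact absurd h (not_mem_image_d hcd' y)
      · exact (mem_image_c hd).mp h
    rw [h₁.anti s₁ h1 t₁ k1 hs₁, h₂.anti s₂ h2 t₂ k2 hs₂]
  · intro i j j' hj hj'
    rcases hsurj i with ⟨i₀, rfl⟩ | ⟨i₀, rfl⟩
    · exact forest_at_inter hc hd hcd hsurj hG₁ hG₂ h₁ h₂ i₀ j j' hj hj'
    · have := forest_at_inter hd hc hcd' hsurj' hG₂ hG₁ h₂ h₁ i₀ j j'
      rw [interFam_comm] at this
      exact this hj hj'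

end abs2

lemma pack_basic : Pack ({{0}} : Set (Finset (Fin 1))) := by
  refine ⟨?_, ?_, ?_, ?_⟩
  · rintro s rfl
    exact ⟨0, Finset.mem_singleton_self 0⟩
  · intro i
    exact ⟨{0}, rfl, by rw [Subsingleton.elim i 0]; exact Finset.mem_singleton_self 0⟩
  · rintro s rfl t rfl _
    rfl
  · intro i j j' hj _
    rw [Subsingleton.elim j i] at hj
    exact absurd hj (ssubset_irrefl _)

lemma natAdd_injective' (n m : ℕ) : Function.Injective (@Fin.natAdd n m) := by
  intro x y h
  have := congrArg Fin.val h
  simp at this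
  exact Fin.ext this

lemma castAdd_ne_natAdd' {n m : ℕ} (x : Fin n) (y : Fin m) :
    Fin.castAdd m x ≠ Fin.natAdd n y := by
  intro h
  have := congrArg Fin.val h
  simp at this
  omega

lemma castAdd_natAdd_surj (n m : ℕ) (z : Fin (n + m)) :
    (∃ x, Fin.castAdd m x = z) ∨ (∃ y, Fin.natAdd n y = z) :=
  Fin.addCases (fun i => Or.inl ⟨i, rfl⟩) (fun i => Or.inr ⟨i, rfl⟩) z

lemma SPfam_pos {N : ℕ} {G : Set (Finset (Fin N))} (h : SPfam N G) : 0 < N := by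
  induction h with
  | basic => exact Nat.one_pos
  | sum h1 h2 ih1 ih2 => omega
  | inter h1 h2 ih1 ih2 => omega

lemma SPfam_pack {N : ℕ} {G : Set (Finset (Fin N))} (h : SPfam N G) : Pack G := by
  induction h with
  | basic => exact pack_basic
  | sum h1 h2 ih1 ih2 =>
    exact pack_sum (Fin.castAdd_injective _ _) (natAdd_injective' _ _) castAdd_ne_natAdd'
      (castAdd_natAdd_surj _ _) ih1 ih2
  | @inter n m G₁ G₂ h1 h2 ih1 ih2 =>
    exact pack_inter (Fin.castAdd_injective _ _) (natAdd_injective' _ _) castAdd_ne_natAdd'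
      (castAdd_natAdd_surj _ _) ⟨⟨0, SPfam_pos h1⟩⟩ ⟨⟨0, SPfam_pos h2⟩⟩ ih1 ih2

end Aux

/-- Theorem 4.3: the support poset of every series-parallel ideal is a forest: for every
`i`, the family of the `C_j(I)` strictly contained in `C_i(I)` is totally ordered by
inclusion. -/
theorem stmt15 {𝕜 : Type} [Field 𝕜] (n : ℕ) (I : Ideal (MvPolynomial (Fin n) 𝕜))
    (hsp : IsSeriesParallel 𝕜 n I) :
    ∀ i j j' : Fin n, suppC I j ⊂ suppC I i → suppC I j' ⊂ suppC I i →
      suppC I j ⊆ suppC I j' ∨ suppC I j' ⊆ suppC I j := by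
  obtain ⟨G, hG, rfl⟩ := exists_SPfam hsp
  have hpack := SPfam_pack hG
  have hgen : sqfreeMinGens (Ideal.span (sfMon 𝕜 '' G)) = G :=
    sqfreeMinGens_span_eq 𝕜 G hpack.anti
  have hsupp : ∀ l, suppC (Ideal.span (sfMon 𝕜 '' G)) l = CS G l := by
    intro l
    simp only [suppC, CS, hgen]
  intro i j j' hj hj'
  rw [hsupp, hsupp] at hj hj'
  rw [hsupp, hsupp]
  exact hpack.forest i j j' hj hj'
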